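/- Let 1<p,q<∞ with 1/p+1/q=1, let μ be a finite Borel measure on ℝ^d, let ν be a (p,q)-Bessel measure for μ with bound B, and let ρ be a Borel probability measure on ℝ^d. Then the convolution ν ∗ ρ is a (p,q)-Bessel measure for μ with the same bound B. The analogous statement with both bounds holds for (p,q)-frame measures. -/

import Mathlib

open MeasureTheory Complex Filter
open scoped ENNReal NNReal Real RealInnerProductSpace

/-- The Fourier transform of the measure `f dμ` at `t`:
`(f dμ)^(t) = ∫ f(x) e^{-2πi t·x} dμ(x)`. -/
noncomputable def FT {d : ℕ} (μ : Measure (EuclideanSpace ℝ (Fin d)))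
    (f : EuclideanSpace ℝ (Fin d) → ℂ) (t : EuclideanSpace ℝ (Fin d)) : ℂ :=
  ∫ x, f x * Complex.exp (-(2 * Real.pi * (⟪t, x⟫ : ℝ) : ℝ) * Complex.I) ∂μ
variable {d : ℕ}

/-- Convolution of two Borel measures on `ℝ^d`:
`(ν ∗ ρ)(E) = ∫∫ χ_E(x+y) dν(x) dρ(y)`. -/
noncomputable def convM (ν ρ : Measure (EuclideanSpace ℝ (Fin d))) :
    Measure (EuclideanSpace ℝ (Fin d)) :=
  Measure.map (fun z : EuclideanSpace ℝ (Fin d) × EuclideanSpace ℝ (Fin d) => z.1 + z.2)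
    (ν.prod ρ)

/-- `ν` is a `(p,q)`-Bessel measure for `μ` with bound `B`. -/
def BesselM (μ ν : Measure (EuclideanSpace ℝ (Fin d))) (p q B : ℝ) : Prop :=
  ∀ f : EuclideanSpace ℝ (Fin d) → ℂ, MemLp f (ENNReal.ofReal p) μ →
    ∫⁻ t, (‖FT μ f t‖₊ : ℝ≥0∞) ^ q ∂ν ≤
      ENNReal.ofReal B * (eLpNorm f (ENNReal.ofReal p) μ) ^ q

/-- `ν` is a `(p,q)`-frame measure for `μ` with bounds `A, B`. -/
def FrameM (μ ν : Measure (EuclideanSpace ℝ (Fin d))) (p q A B : ℝ) : Prop :=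
  BesselM μ ν p q B ∧
  ∀ f : EuclideanSpace ℝ (Fin d) → ℂ, MemLp f (ENNReal.ofReal p) μ →
    ENNReal.ofReal A * (eLpNorm f (ENNReal.ofReal p) μ) ^ q ≤
      ∫⁻ t, (‖FT μ f t‖₊ : ℝ≥0∞) ^ q ∂ν

/-!
Modulating `f` by a character translates its Fourier transform,
`(f dμ)^(t + s) = (e_{-s} f dμ)^(t)`, and leaves `‖f‖_p` unchanged. Hence, by Tonelli, the
integral of `|(f dμ)^|^q` against `ν ∗ ρ` is the `ρ`-average of the `ν`-integrals for the
modulated functions, each of which obeys the frame bounds of `ν`.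

Tonelli needs `ν` to be σ-finite. This holds when `μ ≠ 0`: `|(dμ)^|` is continuous and positive
at `0`, hence at least some `c > 0` on a neighbourhood `U` of `0`, and the Bessel bound applied to
`e_{-s}` gives `c^q ν(s + U) ≤ B ‖1‖_p^q`, so `ν` is locally finite.
-/

open scoped FourierTransform

section Modulation

variable {V : Type*} [NormedAddCommGroup V] [InnerProductSpace ℝ V]

noncomputable def modulate (s : V) (f : V → ℂ) : V → ℂ := fun x => 𝐞 (-⟪x, s⟫) • f x

lemma norm_modulate (s : V) (f : V → ℂ) (x : V) : ‖modulate s f x‖ = ‖f x‖ :=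
  Circle.norm_smul _ _

variable [MeasurableSpace V]

lemma eLpNorm_modulate (μ : Measure V) (P : ℝ≥0∞) (s : V) (f : V → ℂ) :
    eLpNorm (modulate s f) P μ = eLpNorm f P μ :=
  eLpNorm_congr_norm_ae (ae_of_all _ (norm_modulate s f))

lemma MeasureTheory.MemLp.modulate [BorelSpace V] {μ : Measure V} {P : ℝ≥0∞} {f : V → ℂ}
    (hf : MemLp f P μ) (s : V) : MemLp (modulate s f) P μ := by
  refine ⟨?_, by rw [eLpNorm_modulate]; exact hf.2⟩
  exact (Real.continuous_fourierChar.comp (by fun_prop)).aestronglyMeasurable.smul hf.1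

end Modulation

lemma FT_eq_fourierIntegral (μ : Measure (EuclideanSpace ℝ (Fin d)))
    (f : EuclideanSpace ℝ (Fin d) → ℂ) :
    FT μ f = VectorFourier.fourierIntegral 𝐞 μ (innerₗ _) f := by
  ext t
  refine integral_congr_ae (ae_of_all _ fun x => ?_)
  simp only [innerₗ_apply_apply, Circle.smul_def, Real.fourierChar_apply, smul_eq_mul,
    real_inner_comm t x]
  rw [mul_comm]
  push_cast
  ring_nf

lemma continuous_FT {μ : Measure (EuclideanSpace ℝ (Fin d))}
    {f : EuclideanSpace ℝ (Fin d) → ℂ} (hf : Integrable f μ) : Continuous (FT μ f) := by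
  rw [FT_eq_fourierIntegral]
  exact VectorFourier.fourierIntegral_continuous Real.continuous_fourierChar continuous_inner hf

lemma measurable_FT (μ : Measure (EuclideanSpace ℝ (Fin d)))
    (f : EuclideanSpace ℝ (Fin d) → ℂ) : Measurable (FT μ f) := by
  by_cases hf : Integrable f μ
  · exact (continuous_FT hf).measurable
  · have : FT μ f = 0 := by
      ext t
      rw [FT_eq_fourierIntegral]
      exact integral_undef fun h => hf
        ((VectorFourier.fourierIntegral_convergent_iff Real.continuous_fourierChar
          continuous_inner t).1 h)
    rw [this]
    exact measurable_const

lemma FT_apply_add (μ : Measure (EuclideanSpace ℝ (Fin d))) (f : EuclideanSpace ℝ (Fin d) → ℂ)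
    (t s : EuclideanSpace ℝ (Fin d)) : FT μ f (t + s) = FT μ (modulate s f) t := by
  simp only [FT_eq_fourierIntegral, VectorFourier.fourierIntegral, modulate, innerₗ_apply_apply,
    inner_add_right, neg_add, AddChar.map_add_eq_mul, mul_smul]

lemma FT_zero_measure (f : EuclideanSpace ℝ (Fin d) → ℂ) : FT 0 f = 0 :=
  funext fun _ => integral_zero_measure _

lemma FT_one_apply_zero (μ : Measure (EuclideanSpace ℝ (Fin d))) :
    FT μ 1 0 = μ.real Set.univ := by
  simp [FT]

lemma lintegral_FT_convM (μ : Measure (EuclideanSpace ℝ (Fin d)))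
    (ν ρ : Measure (EuclideanSpace ℝ (Fin d))) [SFinite ν] [SFinite ρ]
    (f : EuclideanSpace ℝ (Fin d) → ℂ) (q : ℝ) :
    ∫⁻ t, (‖FT μ f t‖₊ : ℝ≥0∞) ^ q ∂convM ν ρ =
      ∫⁻ s, ∫⁻ t, (‖FT μ (modulate s f) t‖₊ : ℝ≥0∞) ^ q ∂ν ∂ρ := by
  rw [show convM ν ρ = ρ ∗ ν from Measure.conv_comm ν ρ,
    Measure.lintegral_conv ((measurable_FT μ f).nnnorm.coe_nnreal_ennreal.pow_const q)]
  refine lintegral_congr fun s => lintegral_congr fun t => ?_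
  rw [add_comm, FT_apply_add]

namespace BesselM

variable {μ ν : Measure (EuclideanSpace ℝ (Fin d))} {p q B : ℝ}

lemma convM [SFinite ν] (h : BesselM μ ν p q B) (ρ : Measure (EuclideanSpace ℝ (Fin d)))
    [IsProbabilityMeasure ρ] : BesselM μ (convM ν ρ) p q B := by
  intro f hf
  rw [lintegral_FT_convM]
  calc _ ≤ ∫⁻ _, ENNReal.ofReal B * eLpNorm f (ENNReal.ofReal p) μ ^ q ∂ρ :=
        lintegral_mono fun s => eLpNorm_modulate μ _ s f ▸ h _ (hf.modulate s)
    _ = _ := by simp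

lemma ofReal_rpow_mul_measure_le (h : BesselM μ ν p q B) (hq : 0 ≤ q)
    {f : EuclideanSpace ℝ (Fin d) → ℂ} (hf : MemLp f (ENNReal.ofReal p) μ)
    {U : Set (EuclideanSpace ℝ (Fin d))} {c : ℝ} (hc : ∀ t ∈ U, c ≤ ‖FT μ f t‖) :
    ENNReal.ofReal c ^ q * ν U ≤ ENNReal.ofReal B * eLpNorm f (ENNReal.ofReal p) μ ^ q :=
  calc _ = ∫⁻ _ in U, ENNReal.ofReal c ^ q ∂ν := (setLIntegral_const _ _).symm
    _ ≤ ∫⁻ t in U, (‖FT μ f t‖₊ : ℝ≥0∞) ^ q ∂ν := by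
        refine setLIntegral_mono ((measurable_FT μ f).nnnorm.coe_nnreal_ennreal.pow_const q)
          fun t ht => ENNReal.rpow_le_rpow ?_ hq
        rw [← enorm_eq_nnnorm, ← ofReal_norm]
        exact ENNReal.ofReal_le_ofReal (hc t ht)
    _ ≤ ∫⁻ t, (‖FT μ f t‖₊ : ℝ≥0∞) ^ q ∂ν := setLIntegral_le_lintegral _ _
    _ ≤ _ := h f hf

lemma isLocallyFiniteMeasure [IsFiniteMeasure μ] [NeZero μ] (h : BesselM μ ν p q B)
    (hq : 0 < q) : IsLocallyFiniteMeasure ν := by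
  have hμ : 0 < μ.real Set.univ := measureReal_univ_pos
  set c := μ.real Set.univ / 2
  have hc : 0 < c := half_pos hμ
  set U := {t | c < ‖FT μ 1 t‖}
  have hU : IsOpen U := isOpen_lt continuous_const (continuous_FT (integrable_const 1)).norm
  have hU₀ : 0 ∈ U := by
    simp only [U, Set.mem_ofPred_eq, FT_one_apply_zero, Complex.norm_real, Real.norm_eq_abs,
      abs_of_pos hμ]
    exact half_lt_self hμ
  refine ⟨fun s => ⟨(· + -s) ⁻¹' U, ?_, ?_⟩⟩
  · have hcont : Continuous fun t : EuclideanSpace ℝ (Fin d) => t + -s := by fun_prop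
    exact (hU.preimage hcont).mem_nhds (by simpa using hU₀)
  have hbound := h.ofReal_rpow_mul_measure_le hq.le ((memLp_const (1 : ℂ)).modulate (-s))
    (U := (· + -s) ⁻¹' U) (c := c) fun t ht => by rw [← FT_apply_add]; exact ht.le
  rw [eLpNorm_modulate] at hbound
  refine ENNReal.lt_top_of_mul_ne_top_right (ne_top_of_le_ne_top ?_ hbound) ?_
  · exact ENNReal.mul_ne_top ENNReal.ofReal_ne_top
      (ENNReal.rpow_ne_top_of_nonneg hq.le (memLp_const (1 : ℂ)).eLpNorm_ne_top)
  · exact (ENNReal.rpow_pos (ENNReal.ofReal_pos.2 hc) ENNReal.ofReal_ne_top).ne'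

end BesselM

lemma besselM_zero_left (ν : Measure (EuclideanSpace ℝ (Fin d))) (p : ℝ) {q : ℝ} (hq : 0 < q)
    (B : ℝ) : BesselM 0 ν p q B := fun f _ => by
  simp [FT_zero_measure, ENNReal.zero_rpow_of_pos hq]

lemma frameM_zero_left (ν : Measure (EuclideanSpace ℝ (Fin d))) (p : ℝ) {q : ℝ} (hq : 0 < q)
    (A B : ℝ) : FrameM 0 ν p q A B :=
  ⟨besselM_zero_left ν p hq B, fun f _ => by simp [ENNReal.zero_rpow_of_pos hq]⟩

lemma FrameM.convM {μ ν : Measure (EuclideanSpace ℝ (Fin d))} {p q A B : ℝ} [SFinite ν]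
    (h : FrameM μ ν p q A B) (ρ : Measure (EuclideanSpace ℝ (Fin d))) [IsProbabilityMeasure ρ] :
    FrameM μ (convM ν ρ) p q A B := by
  refine ⟨h.1.convM ρ, fun f hf => ?_⟩
  rw [lintegral_FT_convM]
  calc _ = ∫⁻ _, ENNReal.ofReal A * eLpNorm f (ENNReal.ofReal p) μ ^ q ∂ρ := by simp
    _ ≤ _ := lintegral_mono fun s => eLpNorm_modulate μ _ s f ▸ h.2 _ (hf.modulate s)

theorem stmt17_general (p q : ℝ) (hq : 1 < q)
    (μ ν ρ : Measure (EuclideanSpace ℝ (Fin d))) [IsFiniteMeasure μ] [IsProbabilityMeasure ρ]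
    (A B : ℝ) :
    (BesselM μ ν p q B → BesselM μ (convM ν ρ) p q B) ∧
    (FrameM μ ν p q A B → FrameM μ (convM ν ρ) p q A B) := by
  have hq₀ : 0 < q := zero_lt_one.trans hq
  rcases eq_zero_or_neZero μ with rfl | _
  · exact ⟨fun _ => besselM_zero_left _ p hq₀ B, fun _ => frameM_zero_left _ p hq₀ A B⟩
  refine ⟨fun h => ?_, fun h => ?_⟩
  · have := h.isLocallyFiniteMeasure hq₀
    exact h.convM ρ
  · have := h.1.isLocallyFiniteMeasure hq₀
    exact h.convM ρ

/-- If `ν` is a `(p,q)`-Bessel (resp. frame) measure for a finite measure `μ` and `ρ` is a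
Borel probability measure, then `ν ∗ ρ` is a `(p,q)`-Bessel (resp. frame) measure for `μ`
with the same bound(s). -/
theorem stmt17 (p q : ℝ) (hp : 1 < p) (hq : 1 < q) (hpq : 1 / p + 1 / q = 1)
    (μ ν ρ : Measure (EuclideanSpace ℝ (Fin d))) [IsFiniteMeasure μ] [IsProbabilityMeasure ρ]
    (A B : ℝ) (hA : 0 < A) (hB : 0 < B) :
    (BesselM μ ν p q B → BesselM μ (convM ν ρ) p q B) ∧
    (FrameM μ ν p q A B → FrameM μ (convM ν ρ) p q A B) :=
  stmt17_general p q hq μ ν ρ A B
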